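/- Let E be a Banach space, let 1 ≤ p < ∞, and let (T₁(t))_{t≥0} and (T₂(t))_{t≥0} be strongly continuous semigroups on E. Assume there exist M' ≥ 1 and ω' ≥ 0 such that ‖T₁(t)‖ ≤ M'·e^{ω't}, ‖T₂(t)‖ ≤ M'·e^{ω't}, and ‖(T₂(t/n)T₁(t/n))^n‖ ≤ M'·e^{ω't} for all t ≥ 0 and all integers n ≥ 1. Set F := Lᵖ([0,∞); E), let L(t) : F → F be the left shift (L(t)f)(s) := f(s+t), let Q_i(t) : F → E be the bounded operators Q_i(t)f := ∫₀ᵗ T_i(t−s) f(s) ds, and define on ℰ := E × F × F the bounded operators 𝒯₁(t)(x,f,g) := (T₁(t)x + Q₁(t)f, L(t)f, g) and 𝒯₂(t)(x,f,g) := (T₂(t)x + Q₂(t)g, f, L(t)g). Then there exist M ≥ 1 and ω ∈ ℝ such that ‖(𝒯₂(t/n)𝒯₁(t/n))^n‖ ≤ M·e^{ωt} for all t ≥ 0 and all integers n ≥ 1. -/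

import Mathlib

open ContinuousLinearMap MeasureTheory Set
open scoped ENNReal NNReal

/-- The operator `(x,f,g) ↦ (T x + Q f, L f, g)` on `E × F × F`. -/
noncomputable def tripleMatFirst {E F : Type*} [NormedAddCommGroup E] [NormedSpace ℝ E]
    [NormedAddCommGroup F] [NormedSpace ℝ F]
    (T : E →L[ℝ] E) (Q : F →L[ℝ] E) (L : F →L[ℝ] F) : (E × F × F) →L[ℝ] (E × F × F) :=
  (T.comp (fst ℝ E (F × F)) + Q.comp ((fst ℝ F F).comp (snd ℝ E (F × F)))).prod
    (((L.comp ((fst ℝ F F).comp (snd ℝ E (F × F)))).prod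
      ((snd ℝ F F).comp (snd ℝ E (F × F)))))

/-- The operator `(x,f,g) ↦ (T x + Q g, f, L g)` on `E × F × F`. -/
noncomputable def tripleMatSecond {E F : Type*} [NormedAddCommGroup E] [NormedSpace ℝ E]
    [NormedAddCommGroup F] [NormedSpace ℝ F]
    (T : E →L[ℝ] E) (Q : F →L[ℝ] E) (L : F →L[ℝ] F) : (E × F × F) →L[ℝ] (E × F × F) :=
  (T.comp (fst ℝ E (F × F)) + Q.comp ((snd ℝ F F).comp (snd ℝ E (F × F)))).prod
    ((((fst ℝ F F).comp (snd ℝ E (F × F)))).prod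
      (L.comp ((snd ℝ F F).comp (snd ℝ E (F × F)))))

section Aux
set_option linter.unusedSectionVars false
lemma ae_translate {τ : ℝ} (hτ : 0 ≤ τ) {P : ℝ → Prop}
    (h : ∀ᵐ s ∂(volume.restrict (Set.Ici (0:ℝ))), P s) :
    ∀ᵐ s ∂(volume.restrict (Set.Ici (0:ℝ))), P (s + τ) := by
  set μ0 := volume.restrict (Set.Ici (0:ℝ)) with hμ0
  rw [ae_iff] at h ⊢
  set N := {s : ℝ | ¬ P s} with hN
  set T := toMeasurable μ0 N with hT
  have hTm : MeasurableSet T := measurableSet_toMeasurable _ _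
  have hTN : N ⊆ T := subset_toMeasurable _ _
  have hvol : volume (T ∩ Ici (0:ℝ)) = 0 := by
    have := measure_toMeasurable (μ := μ0) N
    rw [h] at this
    rwa [hμ0, Measure.restrict_apply hTm] at this
  have hsub : {s : ℝ | ¬ P (s + τ)} ⊆ ((· + τ) ⁻¹' (T ∩ Ici (0:ℝ))) ∪ (Ici (0:ℝ))ᶜ := by
    intro s hs
    by_cases hs0 : s ∈ Ici (0:ℝ)
    · left
      exact ⟨hTN hs, by simp only [mem_Ici] at hs0 ⊢; linarith⟩
    · right; exact hs0
  refine measure_mono_null hsub ?_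
  refine measure_union_null ?_ ?_
  · have h1 : μ0 ((· + τ) ⁻¹' (T ∩ Ici (0:ℝ))) ≤ volume ((· + τ) ⁻¹' (T ∩ Ici (0:ℝ))) := by
      rw [hμ0]; exact Measure.restrict_le_self _
    have h2 : volume ((· + τ) ⁻¹' (T ∩ Ici (0:ℝ))) = volume (T ∩ Ici (0:ℝ)) :=
      measure_preimage_add_right volume τ _
    exact le_antisymm (h1.trans (by rw [h2, hvol])) zero_le
  · rw [hμ0, Measure.restrict_apply (measurableSet_Ici.compl), compl_inter_self]
    simp

variable {E : Type*} [NormedAddCommGroup E] [NormedSpace ℝ E] [CompleteSpace E]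

lemma shift_eLpNorm_le (p' : ℝ≥0∞) (hp0 : p' ≠ 0) (hpt : p' ≠ ⊤) {τ : ℝ} (hτ : 0 ≤ τ)
    (f : Lp E p' (volume.restrict (Set.Ici (0:ℝ)))) :
    eLpNorm (fun s => f (s + τ)) p' (volume.restrict (Set.Ici (0:ℝ)))
      ≤ eLpNorm (f : ℝ → E) p' (volume.restrict (Set.Ici (0:ℝ))) := by
  rw [eLpNorm_eq_lintegral_rpow_enorm_toReal hp0 hpt, eLpNorm_eq_lintegral_rpow_enorm_toReal hp0 hpt]
  have key : ∫⁻ s in Set.Ici (0:ℝ), ((‖f (s + τ)‖₊ : ℝ≥0∞) ^ p'.toReal) ∂volume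
      ≤ ∫⁻ s in Set.Ici (0:ℝ), ((‖f s‖₊ : ℝ≥0∞) ^ p'.toReal) ∂volume := by
    have hpre : Set.Ici (0:ℝ) = (fun x => x + τ) ⁻¹' (Set.Ici τ) := by
      ext x; simp [Set.mem_Ici]
    have hmp : MeasurePreserving (fun x : ℝ => x + τ) volume volume :=
      measurePreserving_add_right volume τ
    have hme : MeasurableEmbedding (fun x : ℝ => x + τ) :=
      (MeasurableEquiv.addRight τ).measurableEmbedding
    calc ∫⁻ s in Set.Ici (0:ℝ), ((‖f (s + τ)‖₊ : ℝ≥0∞) ^ p'.toReal) ∂volume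
        = ∫⁻ s in Set.Ici τ, ((‖f s‖₊ : ℝ≥0∞) ^ p'.toReal) ∂volume := by
          have h2 := hmp.setLIntegral_comp_preimage_emb hme
            (fun s => ((‖f s‖₊ : ℝ≥0∞) ^ p'.toReal)) (Set.Ici τ)
          rw [← hpre] at h2
          exact h2
      _ ≤ ∫⁻ s in Set.Ici (0:ℝ), ((‖f s‖₊ : ℝ≥0∞) ^ p'.toReal) ∂volume :=
          lintegral_mono_set (Set.Ici_subset_Ici.mpr hτ)
  exact ENNReal.rpow_le_rpow key (by positivity)

lemma shift_norm_le (p' : ℝ≥0∞) (hp0 : p' ≠ 0) (hpt : p' ≠ ⊤) {τ : ℝ} (hτ : 0 ≤ τ)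
    (f g : Lp E p' (volume.restrict (Set.Ici (0:ℝ))))
    (h : ∀ᵐ s ∂(volume.restrict (Set.Ici (0:ℝ))), g s = f (s + τ)) : ‖g‖ ≤ ‖f‖ := by
  rw [Lp.norm_def, Lp.norm_def]
  refine ENNReal.toReal_mono (Lp.eLpNorm_ne_top f) ?_
  calc eLpNorm (g : ℝ → E) p' _ = eLpNorm (fun s => f (s + τ)) p' _ := eLpNorm_congr_ae h
    _ ≤ _ := shift_eLpNorm_le p' hp0 hpt hτ f

lemma shift_iter_ae (p' : ℝ≥0∞) [Fact (1 ≤ p')] {τ : ℝ} (hτ : 0 ≤ τ)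
    (L : Lp E p' (volume.restrict (Set.Ici (0:ℝ))) →L[ℝ] Lp E p' (volume.restrict (Set.Ici (0:ℝ))))
    (hLae : ∀ h : Lp E p' (volume.restrict (Set.Ici (0:ℝ))),
      ∀ᵐ s ∂(volume.restrict (Set.Ici (0:ℝ))), (L h) s = h (s + τ))
    (f : Lp E p' (volume.restrict (Set.Ici (0:ℝ)))) (m : ℕ) :
    ∀ᵐ s ∂(volume.restrict (Set.Ici (0:ℝ))), ((L ^ m) f) s = f (s + m * τ) := by
  induction m with
  | zero =>
      simp only [pow_zero, ContinuousLinearMap.one_apply, Nat.cast_zero, zero_mul, add_zero]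
      exact Filter.Eventually.of_forall (fun s => trivial)
  | succ m ih =>
      have h1 : ∀ᵐ s ∂(volume.restrict (Set.Ici (0:ℝ))),
          ((L ^ (m+1)) f) s = ((L ^ m) f) (s + τ) := by
        have : (L ^ (m+1)) f = L ((L ^ m) f) := by
          rw [pow_succ', ContinuousLinearMap.mul_apply]
        rw [this]
        exact hLae _
      have h2 : ∀ᵐ s ∂(volume.restrict (Set.Ici (0:ℝ))),
          ((L ^ m) f) (s + τ) = f ((s + τ) + m * τ) :=
        ae_translate (P := fun u => ((L ^ m) f) u = f (u + m * τ)) hτ ih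
      filter_upwards [h1, h2] with s e1 e2
      rw [e1, e2]
      congr 1
      push_cast
      ring

lemma loc_int (p' : ℝ≥0∞) (hp1 : 1 ≤ p')
    (f : Lp E p' (volume.restrict (Set.Ici (0:ℝ)))) (a b : ℝ) (ha : 0 ≤ a) :
    IntegrableOn (f : ℝ → E) (Set.Ioc a b) volume := by
  have hm : MemLp (f : ℝ → E) p' (volume.restrict (Set.Ici (0:ℝ))) := Lp.memLp f
  have h1 := hm.restrict (Set.Ioc a b)
  have h2 : (volume.restrict (Set.Ici (0:ℝ))).restrict (Set.Ioc a b)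
      = volume.restrict (Set.Ioc a b) := by
    rw [Measure.restrict_restrict measurableSet_Ioc, Set.inter_eq_left.mpr]
    intro x hx; exact le_trans ha hx.1.le
  rw [h2] at h1
  haveI : IsFiniteMeasure (volume.restrict (Set.Ioc a b)) := by
    constructor
    rw [Measure.restrict_apply_univ, Real.volume_Ioc]
    exact ENNReal.ofReal_lt_top
  exact h1.integrable hp1

lemma holder_int (p' : ℝ≥0∞) [Fact (1 ≤ p')] (hp1 : 1 ≤ p') (hpt : p' ≠ ⊤)
    (f : Lp E p' (volume.restrict (Set.Ici (0:ℝ)))) {t : ℝ} (ht : 0 ≤ t) :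
    ∫ s in (0:ℝ)..t, ‖f s‖ ≤ (1 + t) * ‖f‖ := by
  have hint : IntegrableOn (f : ℝ → E) (Set.Ioc 0 t) volume := loc_int p' hp1 f 0 t le_rfl
  rw [intervalIntegral.integral_of_le ht]
  have heq : ∫ s in Set.Ioc (0:ℝ) t, ‖f s‖ ∂volume
      = (eLpNorm (f : ℝ → E) 1 (volume.restrict (Set.Ioc (0:ℝ) t))).toReal := by
    rw [eLpNorm_one_eq_lintegral_enorm]
    exact integral_norm_eq_lintegral_enorm hint.1
  rw [heq]
  have hle : eLpNorm (f : ℝ → E) 1 (volume.restrict (Set.Ioc (0:ℝ) t))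
      ≤ ENNReal.ofReal ((1 + t) * ‖f‖) := by
    have hmeas : AEStronglyMeasurable (f : ℝ → E) (volume.restrict (Set.Ioc (0:ℝ) t)) := hint.1
    have h3 := eLpNorm_le_eLpNorm_mul_rpow_measure_univ (p := 1) (q := p') hp1 hmeas
    have h4 : eLpNorm (f : ℝ → E) p' (volume.restrict (Set.Ioc (0:ℝ) t))
        ≤ ENNReal.ofReal ‖f‖ := by
      have h5 : volume.restrict (Set.Ioc (0:ℝ) t) ≤ volume.restrict (Set.Ici (0:ℝ)) := by
        have : (volume.restrict (Set.Ici (0:ℝ))).restrict (Set.Ioc 0 t)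
            = volume.restrict (Set.Ioc 0 t) := by
          rw [Measure.restrict_restrict measurableSet_Ioc, Set.inter_eq_left.mpr]
          intro x hx; exact hx.1.le
        rw [← this]
        exact Measure.restrict_le_self
      refine le_trans (eLpNorm_mono_measure _ h5) ?_
      rw [Lp.norm_def, ENNReal.ofReal_toReal (Lp.eLpNorm_ne_top f)]
    have h6 : (volume.restrict (Set.Ioc (0:ℝ) t)) Set.univ ^ (1 / (1:ℝ≥0∞).toReal - 1 / p'.toReal)
        ≤ ENNReal.ofReal (1 + t) := by
      rw [Measure.restrict_apply_univ, Real.volume_Ioc]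
      have hexp0 : 0 ≤ 1 / (1:ℝ≥0∞).toReal - 1 / p'.toReal := by
        simp only [ENNReal.toReal_one, one_div]
        have hp1' : 1 ≤ p'.toReal := by
          rw [← ENNReal.toReal_one]
          exact ENNReal.toReal_mono hpt hp1
        have : p'.toReal⁻¹ ≤ 1 := by
          rw [inv_le_one_iff₀]; right; linarith
        linarith
      have hexp1 : 1 / (1:ℝ≥0∞).toReal - 1 / p'.toReal ≤ 1 := by
        simp only [ENNReal.toReal_one, one_div]
        have : 0 ≤ p'.toReal⁻¹ := by positivity
        linarith
      rcases le_total (t - 0) 1 with hc | hc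
      · refine le_trans (ENNReal.rpow_le_one ?_ hexp0) ?_
        · exact ENNReal.ofReal_le_one.mpr hc
        · exact ENNReal.one_le_ofReal.mpr (by linarith)
      · calc ENNReal.ofReal (t - 0) ^ (1 / (1:ℝ≥0∞).toReal - 1 / p'.toReal)
            ≤ ENNReal.ofReal (t - 0) ^ (1:ℝ) := by
              refine ENNReal.rpow_le_rpow_of_exponent_le ?_ hexp1
              exact ENNReal.one_le_ofReal.mpr hc
          _ = ENNReal.ofReal (t - 0) := by rw [ENNReal.rpow_one]
          _ ≤ ENNReal.ofReal (1 + t) := ENNReal.ofReal_le_ofReal (by linarith)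
    calc eLpNorm (f : ℝ → E) 1 (volume.restrict (Set.Ioc (0:ℝ) t))
        ≤ eLpNorm (f : ℝ → E) p' (volume.restrict (Set.Ioc (0:ℝ) t)) *
          (volume.restrict (Set.Ioc (0:ℝ) t)) Set.univ ^ (1 / (1:ℝ≥0∞).toReal - 1 / p'.toReal) := h3
      _ ≤ ENNReal.ofReal ‖f‖ * ENNReal.ofReal (1 + t) := mul_le_mul' h4 h6
      _ = ENNReal.ofReal ((1 + t) * ‖f‖) := by
          rw [← ENNReal.ofReal_mul (norm_nonneg f)]
          ring_nf
  refine le_trans (ENNReal.toReal_mono ENNReal.ofReal_ne_top hle) ?_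
  rw [ENNReal.toReal_ofReal (by positivity)]

lemma Qbound (p' : ℝ≥0∞) [Fact (1 ≤ p')] (hp1 : 1 ≤ p')
    (T : ℝ → E →L[ℝ] E) (M' ω' : ℝ) (hM' : 1 ≤ M') (hω' : 0 ≤ ω')
    (hb : ∀ r : ℝ, 0 ≤ r → ‖T r‖ ≤ M' * Real.exp (ω' * r))
    {τ σ : ℝ} (hτ : 0 ≤ τ) (hσ : 0 ≤ σ)
    (f h : Lp E p' (volume.restrict (Set.Ici (0:ℝ))))
    (hh : ∀ᵐ s ∂(volume.restrict (Set.Ici (0:ℝ))), h s = f (s + σ)) :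
    ‖∫ s in (0:ℝ)..τ, T (τ - s) (h s)‖
      ≤ M' * Real.exp (ω' * τ) * ∫ s in σ..(σ + τ), ‖f s‖ := by
  have hcong : (∫ s in (0:ℝ)..τ, T (τ - s) (h s)) = ∫ s in (0:ℝ)..τ, T (τ - s) (f (s + σ)) := by
    apply intervalIntegral.integral_congr_ae
    have h0 : ∀ᵐ x ∂(volume : Measure ℝ), x ∈ Set.Ici (0:ℝ) → h x = f (x + σ) :=
      (ae_restrict_iff' measurableSet_Ici).mp hh
    filter_upwards [h0] with x hx hxmem
    have : x ∈ Set.Ioc 0 τ := by rwa [Set.uIoc_of_le hτ] at hxmem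
    rw [hx this.1.le]
  rw [hcong]
  have hIf : IntegrableOn (f : ℝ → E) (Set.Ioc σ (σ + τ)) volume :=
    loc_int p' hp1 f σ (σ + τ) hσ
  have h_iint : IntervalIntegrable (fun s => ‖f s‖) volume σ (σ + τ) := by
    rw [intervalIntegrable_iff_integrableOn_Ioc_of_le (by linarith)]
    exact hIf.norm
  have h_shift : IntervalIntegrable (fun s => ‖f (s + σ)‖) volume 0 τ := by
    have := h_iint.comp_add_right σ
    simpa using this
  have h_bound_int : IntervalIntegrable (fun s => M' * Real.exp (ω' * τ) * ‖f (s + σ)‖)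
      volume 0 τ := h_shift.const_mul _
  have hae : ∀ᵐ s ∂(volume.restrict (Set.uIoc (0:ℝ) τ)),
      ‖T (τ - s) (f (s + σ))‖ ≤ M' * Real.exp (ω' * τ) * ‖f (s + σ)‖ := by
    rw [Set.uIoc_of_le hτ]
    refine (ae_restrict_iff' measurableSet_Ioc).mpr (Filter.Eventually.of_forall ?_)
    intro s hs
    have h1 : ‖T (τ - s) (f (s + σ))‖ ≤ ‖T (τ - s)‖ * ‖f (s + σ)‖ :=
      (T (τ - s)).le_opNorm _
    have h2 : ‖T (τ - s)‖ ≤ M' * Real.exp (ω' * (τ - s)) := hb _ (by linarith [hs.2])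
    have h3 : Real.exp (ω' * (τ - s)) ≤ Real.exp (ω' * τ) := by
      apply Real.exp_le_exp.mpr
      have := hs.1
      nlinarith
    have h4 : M' * Real.exp (ω' * (τ - s)) ≤ M' * Real.exp (ω' * τ) := by
      have hM0 : 0 ≤ M' := by linarith
      nlinarith
    calc ‖T (τ - s) (f (s + σ))‖ ≤ ‖T (τ - s)‖ * ‖f (s + σ)‖ := h1
      _ ≤ M' * Real.exp (ω' * τ) * ‖f (s + σ)‖ := by
          apply mul_le_mul_of_nonneg_right _ (norm_nonneg _)
          exact le_trans h2 h4
  have hmain := intervalIntegral.norm_integral_le_abs_of_norm_le hae h_bound_int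
  have habs : |∫ s in (0:ℝ)..τ, M' * Real.exp (ω' * τ) * ‖f (s + σ)‖|
      = ∫ s in (0:ℝ)..τ, M' * Real.exp (ω' * τ) * ‖f (s + σ)‖ := by
    apply abs_of_nonneg
    apply intervalIntegral.integral_nonneg hτ
    intro u _
    have hM0 : (0:ℝ) ≤ M' := by linarith
    positivity
  rw [habs] at hmain
  refine le_trans hmain ?_
  rw [intervalIntegral.integral_const_mul]
  have hcv : (∫ s in (0:ℝ)..τ, ‖f (s + σ)‖) = ∫ s in σ..(σ + τ), ‖f s‖ := by
    have := intervalIntegral.integral_comp_add_right (a := (0:ℝ)) (b := τ)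
      (fun u => ‖f u‖) σ
    simpa [zero_add, add_comm] using this
  rw [hcv]

end Aux

set_option maxHeartbeats 2000000 in
/-- stability of the Trotter products for the splitting of the
inhomogeneous Cauchy problem on `E × Lᵖ([0,∞);E) × Lᵖ([0,∞);E)`. -/
theorem stability_trotter_inhomogeneous_Lp {E : Type*}
    [NormedAddCommGroup E] [NormedSpace ℝ E] [CompleteSpace E]
    (p : ℝ) (hp : 1 ≤ p) [Fact (1 ≤ ENNReal.ofReal p)]
    (T₁ T₂ : ℝ → E →L[ℝ] E)
    (hT₁0 : T₁ 0 = 1) (hT₂0 : T₂ 0 = 1)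
    (hT₁add : ∀ s t : ℝ, 0 ≤ s → 0 ≤ t → T₁ (t + s) = T₁ t * T₁ s)
    (hT₂add : ∀ s t : ℝ, 0 ≤ s → 0 ≤ t → T₂ (t + s) = T₂ t * T₂ s)
    (hT₁cont : ∀ x : E, ContinuousOn (fun t => T₁ t x) (Set.Ici (0 : ℝ)))
    (hT₂cont : ∀ x : E, ContinuousOn (fun t => T₂ t x) (Set.Ici (0 : ℝ)))
    (M' ω' : ℝ) (hM' : 1 ≤ M') (hω' : 0 ≤ ω')
    (hb₁ : ∀ t : ℝ, 0 ≤ t → ‖T₁ t‖ ≤ M' * Real.exp (ω' * t))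
    (hb₂ : ∀ t : ℝ, 0 ≤ t → ‖T₂ t‖ ≤ M' * Real.exp (ω' * t))
    (hstab : ∀ t : ℝ, 0 ≤ t → ∀ n : ℕ, 1 ≤ n →
      ‖(T₂ (t / n) * T₁ (t / n)) ^ n‖ ≤ M' * Real.exp (ω' * t))
    (L : ℝ → Lp E (ENNReal.ofReal p) (volume.restrict (Set.Ici (0 : ℝ))) →L[ℝ]
      Lp E (ENNReal.ofReal p) (volume.restrict (Set.Ici (0 : ℝ))))
    (hL : ∀ t : ℝ, 0 ≤ t → ∀ f : Lp E (ENNReal.ofReal p) (volume.restrict (Set.Ici (0 : ℝ))),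
      ∀ᵐ s ∂(volume.restrict (Set.Ici (0 : ℝ))), (L t f) s = f (s + t))
    (Q₁ Q₂ : ℝ → Lp E (ENNReal.ofReal p) (volume.restrict (Set.Ici (0 : ℝ))) →L[ℝ] E)
    (hQ₁ : ∀ t : ℝ, 0 ≤ t → ∀ f : Lp E (ENNReal.ofReal p) (volume.restrict (Set.Ici (0 : ℝ))),
      Q₁ t f = ∫ s in (0 : ℝ)..t, T₁ (t - s) (f s))
    (hQ₂ : ∀ t : ℝ, 0 ≤ t → ∀ f : Lp E (ENNReal.ofReal p) (volume.restrict (Set.Ici (0 : ℝ))),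
      Q₂ t f = ∫ s in (0 : ℝ)..t, T₂ (t - s) (f s)) :
    ∃ M ω : ℝ, 1 ≤ M ∧ ∀ t : ℝ, 0 ≤ t → ∀ n : ℕ, 1 ≤ n →
      ‖(tripleMatSecond (T₂ (t / n)) (Q₂ (t / n)) (L (t / n)) *
          tripleMatFirst (T₁ (t / n)) (Q₁ (t / n)) (L (t / n))) ^ n‖ ≤
        M * Real.exp (ω * t) := by
  classical
  set p' : ℝ≥0∞ := ENNReal.ofReal p with hp'def
  have hp'1 : 1 ≤ p' := Fact.out
  have hp'0 : p' ≠ 0 := by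
    intro h0; rw [h0] at hp'1; exact (by simp at hp'1)
  have hp't : p' ≠ ⊤ := ENNReal.ofReal_ne_top
  have hM3 : (1:ℝ) ≤ M' ^ 3 := by
    nlinarith [mul_nonneg (sub_nonneg.mpr hM') (sq_nonneg M'),
      mul_nonneg (sub_nonneg.mpr hM') (le_trans zero_le_one hM')]
  refine ⟨3 * M' ^ 3, 3 * ω' + 1, by nlinarith, ?_⟩
  intro t ht n hn
  have hn0 : (n : ℝ) ≠ 0 := by
    have : 0 < n := hn
    positivity
  set τ : ℝ := t / n with hτdef
  have hτ : 0 ≤ τ := by positivity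
  have hnτ : (n : ℝ) * τ = t := by rw [hτdef]; field_simp
  have hτt : τ ≤ t := by
    rw [← hnτ]
    have h1n : (1:ℝ) ≤ (n:ℝ) := by exact_mod_cast hn
    nlinarith
  set P := tripleMatSecond (T₂ τ) (Q₂ τ) (L τ) * tripleMatFirst (T₁ τ) (Q₁ τ) (L τ) with hPdef
  set A : E →L[ℝ] E := T₂ τ * T₁ τ with hAdef
  have hexp1 : (1:ℝ) ≤ Real.exp (ω' * t) := by
    rw [Real.one_le_exp_iff]; positivity
  have hexpτt : Real.exp (ω' * τ) ≤ Real.exp (ω' * t) := by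
    apply Real.exp_le_exp.mpr; nlinarith
  -- operator norm bound on A^k
  have hAk : ∀ k : ℕ, k ≤ n → ‖(A ^ k : E →L[ℝ] E)‖ ≤ M' * Real.exp (ω' * t) := by
    intro k hk
    rcases Nat.eq_zero_or_pos k with hk0 | hk1
    · rw [hk0, pow_zero]
      calc ‖(1 : E →L[ℝ] E)‖ ≤ 1 := ContinuousLinearMap.norm_id_le
        _ ≤ M' * Real.exp (ω' * t) := by
            nlinarith [mul_le_mul_of_nonneg_left hexp1 (le_trans zero_le_one hM')]
    · have hkτ : (0:ℝ) ≤ (k:ℝ) * τ := by positivity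
      have hdiv : ((k:ℝ) * τ) / (k:ℕ) = τ := by
        have : (k:ℝ) ≠ 0 := by positivity
        field_simp
      have := hstab ((k:ℝ) * τ) hkτ k hk1
      rw [hdiv] at this
      refine le_trans this ?_
      have : Real.exp (ω' * ((k:ℝ)*τ)) ≤ Real.exp (ω' * t) := by
        apply Real.exp_le_exp.mpr
        have hkn : (k:ℝ) ≤ n := Nat.cast_le.mpr hk
        nlinarith [mul_nonneg (mul_nonneg hω' (sub_nonneg.mpr hkn)) hτ]
      nlinarith
  -- main pointwise bound
  have hopbound : ∀ v : E × (Lp E p' (volume.restrict (Set.Ici (0:ℝ)))) ×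
      (Lp E p' (volume.restrict (Set.Ici (0:ℝ)))),
      ‖(P ^ n) v‖ ≤ 3 * M' ^ 3 * Real.exp ((3 * ω' + 1) * t) * ‖v‖ := by
    rintro ⟨x, f, g⟩
    -- the action of P
    have P_apply : ∀ (a : E) (b c : Lp E p' (volume.restrict (Set.Ici (0:ℝ)))),
        P (a, b, c) = (T₂ τ (T₁ τ a) + T₂ τ (Q₁ τ b) + Q₂ τ c, L τ b, L τ c) := by
      intro a b c
      simp [hPdef, tripleMatFirst, tripleMatSecond, ContinuousLinearMap.mul_apply,
        map_add, add_assoc]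
    set w : ℕ → E := fun m => T₂ τ (Q₁ τ (((L τ) ^ m) f)) + Q₂ τ (((L τ) ^ m) g) with hwdef
    have hform : ∀ j : ℕ, (P ^ j) (x, f, g) =
        ((A ^ j) x + ∑ k ∈ Finset.range j, (A ^ k) (w (j - 1 - k)),
          ((L τ) ^ j) f, ((L τ) ^ j) g) := by
      intro j
      induction j with
      | zero => simp
      | succ j ih =>
        have hstep : (P ^ (j+1)) (x, f, g) = P ((P ^ j) (x, f, g)) := by
          rw [pow_succ', ContinuousLinearMap.mul_apply]
        rw [hstep, ih, P_apply]
        simp only [Prod.mk.injEq]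
        refine ⟨?_, ?_, ?_⟩
        · rw [Finset.sum_range_succ']
          have hpow : ∀ (i : ℕ) (y : E), (A ^ (i+1)) y = A ((A ^ i) y) := by
            intro i y; rw [pow_succ', ContinuousLinearMap.mul_apply]
          have hsub : ∀ i : ℕ, j + 1 - 1 - (i + 1) = j - 1 - i := by omega
          have hmulA : ∀ y : E, A y = T₂ τ (T₁ τ y) := fun y => rfl
          simp only [hpow, hsub, pow_zero, ContinuousLinearMap.one_apply,
            Nat.add_sub_cancel, Nat.sub_zero]
          rw [map_add, map_add]
          simp only [Nat.sub_sub, Nat.add_comm]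
          simp only [← hmulA]
          have hwj : w j = (T₂ τ) ((Q₁ τ) (((L τ) ^ j) f)) + (Q₂ τ) (((L τ) ^ j) g) := rfl
          rw [hwj, map_sum]
          abel
        · rw [pow_succ', ContinuousLinearMap.mul_apply]
        · rw [pow_succ', ContinuousLinearMap.mul_apply]
    rw [hform n]
    -- bounds on the three components
    have hLf : ‖((L τ) ^ n) f‖ ≤ ‖f‖ :=
      shift_norm_le p' hp'0 hp't (by positivity : (0:ℝ) ≤ (n:ℝ) * τ) f _
        (shift_iter_ae p' hτ (L τ) (hL τ hτ) f n)
    have hLg : ‖((L τ) ^ n) g‖ ≤ ‖g‖ :=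
      shift_norm_le p' hp'0 hp't (by positivity : (0:ℝ) ≤ (n:ℝ) * τ) g _
        (shift_iter_ae p' hτ (L τ) (hL τ hτ) g n)
    -- bound on w m
    have hwm : ∀ m : ℕ, ‖w m‖ ≤ M' ^ 2 * Real.exp (2 * (ω' * t)) *
        ((∫ s in ((m:ℝ)*τ)..((m:ℝ)*τ + τ), ‖f s‖) + (∫ s in ((m:ℝ)*τ)..((m:ℝ)*τ + τ), ‖g s‖)) := by
      intro m
      have hmτ : (0:ℝ) ≤ (m:ℝ) * τ := by positivity
      have hQf : ‖Q₁ τ (((L τ) ^ m) f)‖ ≤ M' * Real.exp (ω' * τ) *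
          ∫ s in ((m:ℝ)*τ)..((m:ℝ)*τ + τ), ‖f s‖ := by
        rw [hQ₁ τ hτ]
        exact Qbound p' hp'1 T₁ M' ω' hM' hω' hb₁ hτ hmτ f _
          (shift_iter_ae p' hτ (L τ) (hL τ hτ) f m)
      have hQg : ‖Q₂ τ (((L τ) ^ m) g)‖ ≤ M' * Real.exp (ω' * τ) *
          ∫ s in ((m:ℝ)*τ)..((m:ℝ)*τ + τ), ‖g s‖ := by
        rw [hQ₂ τ hτ]
        exact Qbound p' hp'1 T₂ M' ω' hM' hω' hb₂ hτ hmτ g _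
          (shift_iter_ae p' hτ (L τ) (hL τ hτ) g m)
      have hT2 : ‖T₂ τ (Q₁ τ (((L τ) ^ m) f))‖ ≤ M' * Real.exp (ω' * τ) *
          ‖Q₁ τ (((L τ) ^ m) f)‖ := by
        calc ‖T₂ τ (Q₁ τ (((L τ) ^ m) f))‖ ≤ ‖T₂ τ‖ * ‖Q₁ τ (((L τ) ^ m) f)‖ :=
              (T₂ τ).le_opNorm _
          _ ≤ M' * Real.exp (ω' * τ) * ‖Q₁ τ (((L τ) ^ m) f)‖ :=
              mul_le_mul_of_nonneg_right (hb₂ τ hτ) (norm_nonneg _)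
      have hIf : (0:ℝ) ≤ ∫ s in ((m:ℝ)*τ)..((m:ℝ)*τ + τ), ‖f s‖ :=
        intervalIntegral.integral_nonneg (by linarith) (fun u _ => norm_nonneg _)
      have hIg : (0:ℝ) ≤ ∫ s in ((m:ℝ)*τ)..((m:ℝ)*τ + τ), ‖g s‖ :=
        intervalIntegral.integral_nonneg (by linarith) (fun u _ => norm_nonneg _)
      have hexpτ1 : (1:ℝ) ≤ Real.exp (ω' * τ) := by
        rw [Real.one_le_exp_iff]; positivity
      have hexp2 : Real.exp (ω' * τ) * Real.exp (ω' * τ) ≤ Real.exp (2 * (ω' * t)) := by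
        rw [← Real.exp_add, Real.exp_le_exp]
        nlinarith
      calc ‖w m‖ ≤ ‖T₂ τ (Q₁ τ (((L τ) ^ m) f))‖ + ‖Q₂ τ (((L τ) ^ m) g)‖ := norm_add_le _ _
        _ ≤ M' * Real.exp (ω' * τ) * (M' * Real.exp (ω' * τ) *
              ∫ s in ((m:ℝ)*τ)..((m:ℝ)*τ + τ), ‖f s‖) +
            M' * Real.exp (ω' * τ) * ∫ s in ((m:ℝ)*τ)..((m:ℝ)*τ + τ), ‖g s‖ := by
            have := le_trans hT2 (mul_le_mul_of_nonneg_left hQf (by positivity))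
            exact add_le_add this hQg
        _ ≤ M' ^ 2 * Real.exp (2 * (ω' * t)) *
            ((∫ s in ((m:ℝ)*τ)..((m:ℝ)*τ + τ), ‖f s‖) +
              (∫ s in ((m:ℝ)*τ)..((m:ℝ)*τ + τ), ‖g s‖)) := by
            have hM0 : (0:ℝ) ≤ M' := le_trans zero_le_one hM'
            have he0 : (0:ℝ) < Real.exp (ω' * τ) := Real.exp_pos _
            have t1 : M' * Real.exp (ω' * τ) * (M' * Real.exp (ω' * τ) *
                (∫ s in ((m:ℝ)*τ)..((m:ℝ)*τ + τ), ‖f s‖)) ≤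
                M' ^ 2 * Real.exp (2 * (ω' * t)) * (∫ s in ((m:ℝ)*τ)..((m:ℝ)*τ + τ), ‖f s‖) := by
              have h := mul_le_mul_of_nonneg_right
                (mul_le_mul_of_nonneg_left hexp2 (by positivity : (0:ℝ) ≤ M' ^ 2)) hIf
              nlinarith [h]
            have he12 : Real.exp (ω' * τ) ≤ Real.exp (2 * (ω' * t)) := by
              refine le_trans ?_ hexp2
              nlinarith [mul_le_mul_of_nonneg_right hexpτ1 he0.le]
            have t2 : M' * Real.exp (ω' * τ) * (∫ s in ((m:ℝ)*τ)..((m:ℝ)*τ + τ), ‖g s‖) ≤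
                M' ^ 2 * Real.exp (2 * (ω' * t)) * (∫ s in ((m:ℝ)*τ)..((m:ℝ)*τ + τ), ‖g s‖) := by
              have hMM : M' * Real.exp (ω' * τ) ≤ M' ^ 2 * Real.exp (2 * (ω' * t)) := by
                have h1 : M' * Real.exp (ω' * τ) ≤ M' * Real.exp (2 * (ω' * t)) :=
                  mul_le_mul_of_nonneg_left he12 hM0
                have hMsq : M' ≤ M' ^ 2 := by nlinarith [mul_nonneg (sub_nonneg.mpr hM') hM0]
                have h2 : M' * Real.exp (2 * (ω' * t)) ≤ M' ^ 2 * Real.exp (2 * (ω' * t)) :=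
                  mul_le_mul_of_nonneg_right hMsq (Real.exp_pos _).le
                linarith
              exact mul_le_mul_of_nonneg_right hMM hIg
            nlinarith [t1, t2]
    -- sums of integrals over adjacent intervals
    have hsum : ∀ h : Lp E p' (volume.restrict (Set.Ici (0:ℝ))),
        (∑ m ∈ Finset.range n, ∫ s in ((m:ℝ)*τ)..((m:ℝ)*τ + τ), ‖h s‖) =
          ∫ s in (0:ℝ)..t, ‖h s‖ := by
      intro h
      have hint : ∀ k : ℕ, k < n → IntervalIntegrable (fun s => ‖h s‖) volume
          ((fun (i:ℕ) => (i:ℝ)*τ) k) ((fun (i:ℕ) => (i:ℝ)*τ) (k+1)) := by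
        intro k _
        have hk1 : ((k:ℝ))*τ ≤ ((k:ℝ)+1)*τ := by nlinarith
        rw [intervalIntegrable_iff_integrableOn_Ioc_of_le (by push_cast; nlinarith)]
        exact (loc_int p' hp'1 h _ _ (by positivity)).norm
      have := intervalIntegral.sum_integral_adjacent_intervals hint
      simp only [Nat.cast_zero, zero_mul] at this
      calc (∑ m ∈ Finset.range n, ∫ s in ((m:ℝ)*τ)..((m:ℝ)*τ + τ), ‖h s‖)
          = ∑ m ∈ Finset.range n, ∫ s in ((m:ℝ)*τ)..(((m:ℝ)+1)*τ), ‖h s‖ := by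
            apply Finset.sum_congr rfl
            intro m _
            congr 1
            push_cast; ring
        _ = ∫ s in (0:ℝ)..((n:ℝ)*τ), ‖h s‖ := by
            rw [← this]
            apply Finset.sum_congr rfl
            intro m _
            congr 1 <;> push_cast <;> ring
        _ = ∫ s in (0:ℝ)..t, ‖h s‖ := by rw [hnτ]
    -- Hölder bounds
    have hHf : (∫ s in (0:ℝ)..t, ‖f s‖) ≤ (1 + t) * ‖f‖ := holder_int p' hp'1 hp't f ht
    have hHg : (∫ s in (0:ℝ)..t, ‖g s‖) ≤ (1 + t) * ‖g‖ := holder_int p' hp'1 hp't g ht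
    -- first component bound
    have hcomp1 : ‖(A ^ n) x + ∑ k ∈ Finset.range n, (A ^ k) (w (n - 1 - k))‖ ≤
        M' * Real.exp (ω' * t) * ‖x‖ +
          M' ^ 3 * Real.exp (ω' * t) * Real.exp (2 * (ω' * t)) * (1 + t) * (‖f‖ + ‖g‖) := by
      have h1 : ‖(A ^ n) x‖ ≤ M' * Real.exp (ω' * t) * ‖x‖ := by
        calc ‖(A ^ n) x‖ ≤ ‖(A ^ n : E →L[ℝ] E)‖ * ‖x‖ := (A ^ n).le_opNorm x
          _ ≤ M' * Real.exp (ω' * t) * ‖x‖ :=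
              mul_le_mul_of_nonneg_right (hAk n le_rfl) (norm_nonneg _)
      have h2 : ‖∑ k ∈ Finset.range n, (A ^ k) (w (n - 1 - k))‖ ≤
          M' * Real.exp (ω' * t) * ∑ m ∈ Finset.range n, ‖w m‖ := by
        calc ‖∑ k ∈ Finset.range n, (A ^ k) (w (n - 1 - k))‖
            ≤ ∑ k ∈ Finset.range n, ‖(A ^ k) (w (n - 1 - k))‖ := norm_sum_le _ _
          _ ≤ ∑ k ∈ Finset.range n, M' * Real.exp (ω' * t) * ‖w (n - 1 - k)‖ := by
              apply Finset.sum_le_sum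
              intro k hk
              calc ‖(A ^ k) (w (n - 1 - k))‖ ≤ ‖(A ^ k : E →L[ℝ] E)‖ * ‖w (n - 1 - k)‖ :=
                    (A ^ k).le_opNorm _
                _ ≤ M' * Real.exp (ω' * t) * ‖w (n - 1 - k)‖ :=
                    mul_le_mul_of_nonneg_right
                      (hAk k (le_of_lt (Finset.mem_range.mp hk))) (norm_nonneg _)
          _ = M' * Real.exp (ω' * t) * ∑ k ∈ Finset.range n, ‖w (n - 1 - k)‖ := by
              rw [Finset.mul_sum]
          _ = M' * Real.exp (ω' * t) * ∑ m ∈ Finset.range n, ‖w m‖ := by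
              congr 1
              exact Finset.sum_range_reflect (fun m => ‖w m‖) n
      have h3 : (∑ m ∈ Finset.range n, ‖w m‖) ≤
          M' ^ 2 * Real.exp (2 * (ω' * t)) * (1 + t) * (‖f‖ + ‖g‖) := by
        calc (∑ m ∈ Finset.range n, ‖w m‖)
            ≤ ∑ m ∈ Finset.range n, M' ^ 2 * Real.exp (2 * (ω' * t)) *
                ((∫ s in ((m:ℝ)*τ)..((m:ℝ)*τ + τ), ‖f s‖) +
                  (∫ s in ((m:ℝ)*τ)..((m:ℝ)*τ + τ), ‖g s‖)) :=
              Finset.sum_le_sum (fun m _ => hwm m)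
          _ = M' ^ 2 * Real.exp (2 * (ω' * t)) *
              ((∫ s in (0:ℝ)..t, ‖f s‖) + (∫ s in (0:ℝ)..t, ‖g s‖)) := by
              rw [← Finset.mul_sum, Finset.sum_add_distrib, hsum f, hsum g]
          _ ≤ M' ^ 2 * Real.exp (2 * (ω' * t)) * ((1 + t) * ‖f‖ + (1 + t) * ‖g‖) := by
              have hpos : (0:ℝ) < M' ^ 2 * Real.exp (2 * (ω' * t)) := by positivity
              apply mul_le_mul_of_nonneg_left _ hpos.le
              exact add_le_add hHf hHg
          _ = M' ^ 2 * Real.exp (2 * (ω' * t)) * (1 + t) * (‖f‖ + ‖g‖) := by ring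
      calc ‖(A ^ n) x + ∑ k ∈ Finset.range n, (A ^ k) (w (n - 1 - k))‖
          ≤ ‖(A ^ n) x‖ + ‖∑ k ∈ Finset.range n, (A ^ k) (w (n - 1 - k))‖ := norm_add_le _ _
        _ ≤ M' * Real.exp (ω' * t) * ‖x‖ +
            M' * Real.exp (ω' * t) * (M' ^ 2 * Real.exp (2 * (ω' * t)) * (1 + t) * (‖f‖ + ‖g‖)) := by
            refine add_le_add h1 (le_trans h2 ?_)
            apply mul_le_mul_of_nonneg_left h3 (by positivity)
        _ = M' * Real.exp (ω' * t) * ‖x‖ +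
            M' ^ 3 * Real.exp (ω' * t) * Real.exp (2 * (ω' * t)) * (1 + t) * (‖f‖ + ‖g‖) := by
            ring
    -- assemble
    have hvx : ‖x‖ ≤ ‖(x, f, g)‖ := norm_fst_le (x, f, g)
    have hvf : ‖f‖ ≤ ‖(x, f, g)‖ :=
      le_trans (norm_fst_le (f, g)) (norm_snd_le (x, f, g))
    have hvg : ‖g‖ ≤ ‖(x, f, g)‖ :=
      le_trans (norm_snd_le (f, g)) (norm_snd_le (x, f, g))
    have hV0 : (0:ℝ) ≤ ‖(x, f, g)‖ := norm_nonneg _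
    have hexp3 : Real.exp (ω' * t) * Real.exp (2 * (ω' * t)) * Real.exp t
        = Real.exp ((3 * ω' + 1) * t) := by
      rw [← Real.exp_add, ← Real.exp_add]
      ring_nf
    have hexpt : (1:ℝ) + t ≤ Real.exp t := by
      have := Real.add_one_le_exp t
      linarith
    have hKge1 : (1:ℝ) ≤ 3 * M' ^ 3 * Real.exp ((3 * ω' + 1) * t) := by
      have h1 : (1:ℝ) ≤ Real.exp ((3 * ω' + 1) * t) := by
        rw [Real.one_le_exp_iff]; positivity
      nlinarith
    rw [Prod.norm_def, Prod.norm_def]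
    simp only [max_le_iff]
    refine ⟨?_, ?_, ?_⟩
    · refine le_trans hcomp1 ?_
      have hEt : (0:ℝ) < Real.exp t := Real.exp_pos t
      have e1 : M' * Real.exp (ω' * t) * ‖x‖ ≤ M' ^ 3 * Real.exp ((3*ω'+1)*t) * ‖(x,f,g)‖ := by
        have hA1 : M' * Real.exp (ω' * t) ≤ M' ^ 3 * Real.exp ((3*ω'+1)*t) := by
          have h2 : Real.exp (ω' * t) ≤ Real.exp ((3*ω'+1)*t) := by
            apply Real.exp_le_exp.mpr; nlinarith
          have hM0 : (0:ℝ) ≤ M' := le_trans zero_le_one hM'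
          calc M' * Real.exp (ω' * t) ≤ M' * Real.exp ((3*ω'+1)*t) :=
                mul_le_mul_of_nonneg_left h2 hM0
            _ ≤ M' ^ 3 * Real.exp ((3*ω'+1)*t) := by
                have hM13 : M' ≤ M' ^ 3 := by
                  nlinarith [mul_nonneg (mul_nonneg (sub_nonneg.mpr hM') hM0)
                    (by linarith : (0:ℝ) ≤ M' + 1)]
                exact mul_le_mul_of_nonneg_right hM13 (Real.exp_pos _).le
        calc M' * Real.exp (ω' * t) * ‖x‖ ≤ M' * Real.exp (ω' * t) * ‖(x,f,g)‖ := by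
              apply mul_le_mul_of_nonneg_left hvx (by positivity)
          _ ≤ M' ^ 3 * Real.exp ((3*ω'+1)*t) * ‖(x,f,g)‖ :=
              mul_le_mul_of_nonneg_right hA1 hV0
      have e2 : M' ^ 3 * Real.exp (ω' * t) * Real.exp (2 * (ω' * t)) * (1 + t) * (‖f‖ + ‖g‖)
          ≤ 2 * (M' ^ 3 * Real.exp ((3*ω'+1)*t)) * ‖(x,f,g)‖ := by
        have hfg : ‖f‖ + ‖g‖ ≤ 2 * ‖(x,f,g)‖ := by linarith
        have h1t : (0:ℝ) ≤ 1 + t := by linarith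
        have hc : M' ^ 3 * Real.exp (ω' * t) * Real.exp (2 * (ω' * t)) * (1 + t)
            ≤ M' ^ 3 * Real.exp ((3*ω'+1)*t) := by
          rw [← hexp3]
          have hpos : (0:ℝ) ≤ M' ^ 3 * (Real.exp (ω' * t) * Real.exp (2 * (ω' * t))) := by
            positivity
          have := mul_le_mul_of_nonneg_left hexpt hpos
          nlinarith [this]
        calc M' ^ 3 * Real.exp (ω' * t) * Real.exp (2 * (ω' * t)) * (1 + t) * (‖f‖ + ‖g‖)
            ≤ M' ^ 3 * Real.exp ((3*ω'+1)*t) * (‖f‖ + ‖g‖) := by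
              apply mul_le_mul_of_nonneg_right hc (by positivity)
          _ ≤ M' ^ 3 * Real.exp ((3*ω'+1)*t) * (2 * ‖(x,f,g)‖) := by
              apply mul_le_mul_of_nonneg_left hfg (by positivity)
          _ = 2 * (M' ^ 3 * Real.exp ((3*ω'+1)*t)) * ‖(x,f,g)‖ := by ring
      calc M' * Real.exp (ω' * t) * ‖x‖ +
            M' ^ 3 * Real.exp (ω' * t) * Real.exp (2 * (ω' * t)) * (1 + t) * (‖f‖ + ‖g‖)
          ≤ M' ^ 3 * Real.exp ((3*ω'+1)*t) * ‖(x,f,g)‖ +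
            2 * (M' ^ 3 * Real.exp ((3*ω'+1)*t)) * ‖(x,f,g)‖ := add_le_add e1 e2
        _ = 3 * M' ^ 3 * Real.exp ((3*ω'+1)*t) * ‖(x,f,g)‖ := by ring
    · calc ‖((L τ) ^ n) f‖ ≤ ‖f‖ := hLf
        _ ≤ ‖(x,f,g)‖ := hvf
        _ ≤ 3 * M' ^ 3 * Real.exp ((3*ω'+1)*t) * ‖(x,f,g)‖ := by nlinarith
    · calc ‖((L τ) ^ n) g‖ ≤ ‖g‖ := hLg
        _ ≤ ‖(x,f,g)‖ := hvg
        _ ≤ 3 * M' ^ 3 * Real.exp ((3*ω'+1)*t) * ‖(x,f,g)‖ := by nlinarith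
  exact ContinuousLinearMap.opNorm_le_bound _ (by positivity) hopbound
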